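/- Let \nu > 0, let z_1 > ... > z_N > 0 be the zeros of L_N^{(\nu-1)}, set r_i = \sqrt{2 z_i}, and let S_N be the N\times N matrix with s_{ii} = 1 + 2\nu/r_i^2 + 2\sum_{l\ne i}[(r_i - r_l)^{-2} + (r_i + r_l)^{-2}] and s_{ij} = 2(r_i + r_j)^{-2} - 2(r_i - r_j)^{-2} for i \ne j. Then for any vector v \in \mathbb{R}^N, (S_N v)_i = 2[ v_i + 4 \sum_{l \ne i} r_l ( v_i r_l - v_l r_i )/(r_i^2 - r_l^2)^2 ]. -/

import Mathlib

/-!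
At a zero `z_i` of `p = L_N^{(ν-1)}` the factorization `p = c ∏ⱼ (X - z_j)` gives
`p''(z_i) = 2 p'(z_i) ∑_{l ≠ i} (z_i - z_l)⁻¹` with `p'(z_i) ≠ 0`, so the Laguerre equation
`x p'' + (ν - x) p' + N p = 0` yields the Stieltjes relations
`∑_{l ≠ i} (z_i - z_l)⁻¹ = (z_i - ν) / (2 z_i)`. In the variables `r_i = √(2 z_i)` these read
`∑_{l ≠ i} 4 / (r_i² - r_l²) = 1 - 2ν / r_i²`. Once each off-diagonal entry `s_{il} v_l` is paired
with its share `2[(r_i - r_l)⁻² + (r_i + r_l)⁻²] v_i` of the diagonal term, the pair equals the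
`l`-th summand of the claim plus `v_i · 4 / (r_i² - r_l²)`, and the Stieltjes relation collapses
what is left of the diagonal to `2 v_i`.
-/

open Polynomial Finset Matrix

/-- The generalized Laguerre polynomials `L_n^{(α)}`, orthogonal w.r.t. the weight
`e^{-x} x^α` on `(0,∞)`, defined via the standard three-term recurrence. -/
noncomputable def laguerre (α : ℝ) : ℕ → Polynomial ℝ
  | 0 => 1
  | 1 => C (1 + α) - X
  | n + 2 => C (((n : ℝ) + 2)⁻¹) *
      ((C (2 * (n : ℝ) + 3 + α) - X) * laguerre α (n + 1) - C ((n : ℝ) + 1 + α) * laguerre α n)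

namespace Polynomial

variable {R ι : Type*}

section CommRing

variable [CommRing R]

theorem eval_derivative_X_sub_C_mul (a : R) (q : R[X]) :
    (derivative ((X - C a) * q)).eval a = q.eval a := by
  simp [derivative_mul]

theorem eval_derivative_derivative_X_sub_C_mul (a : R) (q : R[X]) :
    (derivative (derivative ((X - C a) * q))).eval a = 2 * (derivative q).eval a := by
  simp only [derivative_mul, derivative_add, derivative_sub, derivative_X, derivative_C, sub_zero,
    one_mul, eval_add, eval_mul, eval_sub, eval_X, eval_C, sub_self, zero_mul, add_zero]
  ring

theorem eval_derivative_prod_univ_X_sub_C_self [Fintype ι] [DecidableEq ι] (z : ι → R) (i : ι) :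
    (derivative (∏ j, (X - C (z j)))).eval (z i) = ∏ j ∈ univ.erase i, (z i - z j) := by
  rw [← mul_prod_erase univ _ (mem_univ i), eval_derivative_X_sub_C_mul, eval_prod]
  simp

theorem eq_C_leadingCoeff_mul_prod_X_sub_C [IsDomain R] [Fintype ι]
    {p : R[X]} (hp : p ≠ 0) (hdeg : p.natDegree ≤ Fintype.card ι) {z : ι → R}
    (hz : Function.Injective z) (hroot : ∀ i, p.IsRoot (z i)) :
    p = C p.leadingCoeff * ∏ i, (X - C (z i)) := by
  set m : Multiset R := univ.val.map z
  have hm : m ≤ p.roots := by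
    refine (Multiset.le_iff_subset (univ.nodup.map hz)).mpr fun a ha => ?_
    obtain ⟨j, -, rfl⟩ := Multiset.mem_map.mp ha
    exact mem_roots'.mpr ⟨hp, hroot j⟩
  have hcard : Multiset.card m = Fintype.card ι := by simp [m]
  have hroots : m = p.roots :=
    Multiset.eq_of_le_of_card_le hm (hcard ▸ p.card_roots'.trans hdeg)
  have hcard_roots : Multiset.card p.roots = p.natDegree :=
    le_antisymm p.card_roots' (hroots ▸ hcard ▸ hdeg)
  conv_lhs => rw [← C_leadingCoeff_mul_prod_multiset_X_sub_C hcard_roots, ← hroots,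
    Multiset.map_map]
  rfl

end CommRing

section Field

variable [Field R] [DecidableEq ι]

theorem eval_derivative_prod_X_sub_C (s : Finset ι) (z : ι → R) {a : R}
    (ha : ∀ j ∈ s, a ≠ z j) :
    (derivative (∏ j ∈ s, (X - C (z j)))).eval a =
      (∏ j ∈ s, (a - z j)) * ∑ j ∈ s, (a - z j)⁻¹ := by
  rw [derivative_prod_finset, eval_finsetSum, mul_sum]
  refine sum_congr rfl fun j hj => ?_
  simp only [derivative_sub, derivative_X, derivative_C, sub_zero, mul_one, eval_prod, eval_sub,
    eval_X, eval_C]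
  rw [← mul_prod_erase s (fun k => a - z k) hj, mul_right_comm,
    mul_inv_cancel₀ (sub_ne_zero.mpr (ha j hj)), one_mul]

theorem eval_derivative_derivative_prod_univ_X_sub_C_self [Fintype ι] {z : ι → R}
    (hz : Function.Injective z) (i : ι) :
    (derivative (derivative (∏ j, (X - C (z j))))).eval (z i) =
      2 * (derivative (∏ j, (X - C (z j)))).eval (z i) * ∑ l ∈ univ.erase i, (z i - z l)⁻¹ := by
  rw [eval_derivative_prod_univ_X_sub_C_self, ← mul_prod_erase univ _ (mem_univ i),
    eval_derivative_derivative_X_sub_C_mul,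
    eval_derivative_prod_X_sub_C _ _ fun j hj => hz.ne (ne_of_mem_erase hj).symm, mul_assoc]

end Field

end Polynomial

namespace laguerre

theorem C_mul_succ_succ (α : ℝ) (n : ℕ) :
    C ((n : ℝ) + 2) * laguerre α (n + 2) =
      (C (2 * (n : ℝ) + 3 + α) - X) * laguerre α (n + 1) - C ((n : ℝ) + 1 + α) * laguerre α n := by
  rw [laguerre, ← mul_assoc, ← C_mul, mul_inv_cancel₀ (by positivity), C_1, one_mul]

theorem derivative_recurrences (α : ℝ) (n : ℕ) :
    derivative (laguerre α (n + 1)) = derivative (laguerre α n) - laguerre α n ∧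
    X * derivative (laguerre α (n + 1)) =
      C ((n : ℝ) + 1) * laguerre α (n + 1) - C ((n : ℝ) + 1 + α) * laguerre α n := by
  induction n with
  | zero => simp [laguerre]
  | succ n ih =>
    obtain ⟨ihA, ihB⟩ := ih
    have hrec := C_mul_succ_succ α n
    have hrec' := congrArg derivative hrec
    simp only [derivative_mul, derivative_sub, derivative_C, derivative_X, zero_mul, zero_sub,
      zero_add] at hrec'
    simp only [C_add, C_mul, C_1, map_ofNat] at hrec' hrec ihA ihB
    have hA : derivative (laguerre α (n + 2)) =
        derivative (laguerre α (n + 1)) - laguerre α (n + 1) := by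
      refine mul_left_cancel₀ (C_ne_zero.mpr (by positivity : (n : ℝ) + 2 ≠ 0)) ?_
      simp only [C_add, map_ofNat]
      linear_combination hrec' - ihB + (C (n : ℝ) + 1 + C α) * ihA
    refine ⟨hA, ?_⟩
    rw [hA]
    push_cast
    simp only [C_add, C_1]
    linear_combination ihB - hrec

theorem ode (α : ℝ) (n : ℕ) :
    X * derivative (derivative (laguerre α n)) + (C (α + 1) - X) * derivative (laguerre α n)
      + C (n : ℝ) * laguerre α n = 0 := by
  cases n with
  | zero => simp [laguerre]
  | succ n =>
    obtain ⟨hA, hB⟩ := derivative_recurrences α n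
    have hB' := congrArg derivative hB
    simp only [derivative_mul, derivative_sub, derivative_C, derivative_X, zero_mul, zero_add,
      one_mul] at hB'
    simp only [Nat.cast_add, Nat.cast_one, C_add, C_1] at hB' hB hA ⊢
    linear_combination hB' - hB + (C (n : ℝ) + 1 + C α) * hA

theorem natDegree_le (α : ℝ) (n : ℕ) : (laguerre α n).natDegree ≤ n := by
  induction n using Nat.twoStepInduction with
  | zero => simp [laguerre]
  | one => rw [laguerre]; compute_degree
  | more n ih₀ ih₁ =>
    rw [laguerre]
    refine natDegree_C_mul_le _ _ |>.trans <| natDegree_sub_le _ _ |>.trans <| max_le ?_ ?_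
    · refine natDegree_mul_le.trans ?_
      have : (C (2 * (n : ℝ) + 3 + α) - X).natDegree ≤ 1 := by compute_degree
      omega
    · exact natDegree_C_mul_le _ _ |>.trans (by omega)

theorem coeff_self (α : ℝ) (n : ℕ) : (laguerre α n).coeff n = (-1) ^ n / n.factorial := by
  induction n using Nat.twoStepInduction with
  | zero => simp [laguerre]
  | one => simp [laguerre, coeff_one]
  | more n _ ih₁ =>
    have h := congrArg (coeff · (n + 2)) (C_mul_succ_succ α n)
    simp only [sub_mul, coeff_C_mul, coeff_sub, coeff_X_mul, ih₁,
      coeff_eq_zero_of_natDegree_lt ((natDegree_le α n).trans_lt (by omega : n < n + 2)),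
      coeff_eq_zero_of_natDegree_lt ((natDegree_le α (n + 1)).trans_lt
        (by omega : n + 1 < n + 2))] at h
    rw [Nat.factorial_succ, Nat.cast_mul, eq_div_iff (by positivity)]
    field_simp at h
    push_cast
    linear_combination h

theorem ne_zero (α : ℝ) (n : ℕ) : laguerre α n ≠ 0 := fun h => by
  have hcoeff := coeff_self α n
  rw [h, coeff_zero] at hcoeff
  exact div_ne_zero (pow_ne_zero _ (by norm_num)) (by positivity) hcoeff.symm

theorem sum_inv_sub_zeros (α : ℝ) {n : ℕ} {z : Fin n → ℝ} (hz : Function.Injective z)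
    (hroot : ∀ i, (laguerre α n).eval (z i) = 0) (i : Fin n) (hzi : z i ≠ 0) :
    ∑ l ∈ univ.erase i, (z i - z l)⁻¹ = (z i - (α + 1)) / (2 * z i) := by
  set c := (laguerre α n).leadingCoeff
  have hc : c ≠ 0 := leadingCoeff_ne_zero.mpr (ne_zero α n)
  have hfactor : laguerre α n = C c * ∏ j, (X - C (z j)) :=
    eq_C_leadingCoeff_mul_prod_X_sub_C (ne_zero α n) (by simpa using natDegree_le α n) hz hroot
  have hP' : (derivative (∏ j, (X - C (z j)))).eval (z i) ≠ 0 := by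
    rw [eval_derivative_prod_univ_X_sub_C_self]
    exact prod_ne_zero_iff.mpr fun j hj => sub_ne_zero.mpr (hz.ne (ne_of_mem_erase hj).symm)
  have hode := congrArg (eval (z i)) (ode α n)
  simp only [eval_add, eval_mul, eval_sub, eval_X, eval_C, eval_zero, hroot i, mul_zero,
    add_zero] at hode
  simp only [hfactor, derivative_C_mul, eval_mul, eval_C,
    eval_derivative_derivative_prod_univ_X_sub_C_self hz] at hode
  rw [eq_div_iff (mul_ne_zero two_ne_zero hzi)]
  refine mul_right_cancel₀ (mul_ne_zero hc hP') ?_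
  linear_combination hode

end laguerre

/-- The matrix `S_N` of the statement, in terms of the rescaled zeros `r`. -/
noncomputable def stieltjesMatrix {ι : Type*} [Fintype ι] [DecidableEq ι] (ν : ℝ) (r : ι → ℝ) :
    Matrix ι ι ℝ :=
  of fun i j => if i = j
    then 1 + 2 * ν / r i ^ 2 + 2 * ∑ l ∈ univ.erase i, (((r i - r l) ^ 2)⁻¹ + ((r i + r l) ^ 2)⁻¹)
    else 2 * ((r i + r j) ^ 2)⁻¹ - 2 * ((r i - r j) ^ 2)⁻¹

theorem stieltjesMatrix_mulVec_apply {ι : Type*} [Fintype ι] [DecidableEq ι] {ν : ℝ}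
    {r : ι → ℝ} {i : ι} (hsq : ∀ l, l ≠ i → r i ^ 2 ≠ r l ^ 2)
    (hsum : ∑ l ∈ univ.erase i, 4 / (r i ^ 2 - r l ^ 2) = 1 - 2 * ν / r i ^ 2) (v : ι → ℝ) :
    (stieltjesMatrix ν r *ᵥ v) i = 2 * (v i + 4 * ∑ l ∈ univ.erase i,
      r l * (v i * r l - v l * r i) / (r i ^ 2 - r l ^ 2) ^ 2) := by
  have hterm : ∀ l ∈ univ.erase i,
      stieltjesMatrix ν r i l * v l + 2 * (((r i - r l) ^ 2)⁻¹ + ((r i + r l) ^ 2)⁻¹) * v i =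
        8 * (r l * (v i * r l - v l * r i) / (r i ^ 2 - r l ^ 2) ^ 2)
          + v i * (4 / (r i ^ 2 - r l ^ 2)) := by
    intro l hl
    have hli := ne_of_mem_erase hl
    have hsub : r i - r l ≠ 0 := fun h => hsq l hli (by rw [sub_eq_zero.mp h])
    have hadd : r i + r l ≠ 0 := fun h => hsq l hli (by rw [eq_neg_of_add_eq_zero_left h]; ring)
    have hsq' : r i ^ 2 - r l ^ 2 ≠ 0 := sub_ne_zero.mpr (hsq l hli)
    simp only [stieltjesMatrix, of_apply, if_neg hli.symm]
    field_simp
    ring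
  have hrow := sum_congr rfl hterm
  rw [sum_add_distrib, sum_add_distrib, ← sum_mul, ← mul_sum, ← mul_sum, ← mul_sum, hsum] at hrow
  rw [mulVec, dotProduct, ← add_sum_erase _ _ (mem_univ i)]
  rw [show stieltjesMatrix ν r i i = _ from if_pos rfl]
  linear_combination hrow

theorem stmt_13_general (N : ℕ) (ν : ℝ) (z : Fin N → ℝ)
    (hord : ∀ i j : Fin N, i < j → z j < z i)
    (hpos : ∀ i, 0 < z i)
    (hroot : ∀ i, (laguerre (ν - 1) N).eval (z i) = 0)
    (r : Fin N → ℝ) (hr : ∀ i, r i = Real.sqrt (2 * z i))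
    (S : Matrix (Fin N) (Fin N) ℝ)
    (hS : ∀ i j, S i j = if i = j
      then 1 + 2 * ν / (r i) ^ 2
        + 2 * ∑ l ∈ Finset.univ.erase i, (((r i - r l) ^ 2)⁻¹ + ((r i + r l) ^ 2)⁻¹)
      else 2 * ((r i + r j) ^ 2)⁻¹ - 2 * ((r i - r j) ^ 2)⁻¹) :
    ∀ v : Fin N → ℝ, ∀ i,
      S.mulVec v i = 2 * (v i + 4 * ∑ l ∈ Finset.univ.erase i,
        r l * (v i * r l - v l * r i) / ((r i) ^ 2 - (r l) ^ 2) ^ 2) := by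
  intro v i
  have hz : Function.Injective z := StrictAnti.injective hord
  have hr2 : ∀ j, r j ^ 2 = 2 * z j := fun j => by rw [hr, Real.sq_sqrt (by linarith [hpos j])]
  obtain rfl : S = stieltjesMatrix ν r := Matrix.ext hS
  refine stieltjesMatrix_mulVec_apply (fun l hl h => hl (hz ?_).symm) ?_ v
  · linarith [hr2 i, hr2 l]
  have hzi : z i ≠ 0 := (hpos i).ne'
  have hstieltjes := laguerre.sum_inv_sub_zeros (ν - 1) hz hroot i hzi
  rw [sub_add_cancel] at hstieltjes
  simp only [hr2]
  calc ∑ l ∈ univ.erase i, 4 / (2 * z i - 2 * z l)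
      = 2 * ∑ l ∈ univ.erase i, (z i - z l)⁻¹ := by
        rw [mul_sum]; exact sum_congr rfl fun _ _ => by rw [← mul_sub, div_mul_eq_div_div]; ring
    _ = 1 - 2 * ν / (2 * z i) := by rw [hstieltjes]; field_simp

theorem stmt_13 (N : ℕ) (ν : ℝ) (hν : 0 < ν) (z : Fin N → ℝ)
    (hord : ∀ i j : Fin N, i < j → z j < z i)
    (hpos : ∀ i, 0 < z i)
    (hroot : ∀ i, (laguerre (ν - 1) N).eval (z i) = 0)
    (r : Fin N → ℝ) (hr : ∀ i, r i = Real.sqrt (2 * z i))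
    (S : Matrix (Fin N) (Fin N) ℝ)
    (hS : ∀ i j, S i j = if i = j
      then 1 + 2 * ν / (r i) ^ 2
        + 2 * ∑ l ∈ Finset.univ.erase i, (((r i - r l) ^ 2)⁻¹ + ((r i + r l) ^ 2)⁻¹)
      else 2 * ((r i + r j) ^ 2)⁻¹ - 2 * ((r i - r j) ^ 2)⁻¹) :
    ∀ v : Fin N → ℝ, ∀ i,
      S.mulVec v i = 2 * (v i + 4 * ∑ l ∈ Finset.univ.erase i,
        r l * (v i * r l - v l * r i) / ((r i) ^ 2 - (r l) ^ 2) ^ 2) :=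
  stmt_13_general N ν z hord hpos hroot r hr S hS
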